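/- The set of AR-hypotheses is not convex: there exist a TBox T, ABox A, observation α, and ABoxes B₁ ⊊ B₂ ⊊ B₃ such that B₁ and B₃ are AR-hypotheses for ⟨⟨T,A⟩, α⟩ but B₂ is not. Concretely, with T = {B₁ ⊑ ¬B₂, C₁ ⊑ ¬C₂, B₁ ⊑ A, B₃ ⊑ A}, A = {C₁(a), C₂(a)}, observation A(a), hypotheses {B₁(a)} ⊊ {B₁(a), B₂(a)} ⊊ {B₁(a), B₂(a), B₃(a)}: the first and third are AR-hypotheses, the middle is not. -/
import Mathlib


variable {α : Type*}

/-- `R` is a repair of the ABox `A`: a subset-maximal `T`-consistent subset of `A`. -/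
def IsRepair (Inc : Set α → Prop) (A R : Set α) : Prop :=
  R ⊆ A ∧ ¬ Inc R ∧ ∀ R' : Set α, R' ⊆ A → ¬ Inc R' → R ⊆ R' → R' = R

/-- The conflicts of `A`: subset-minimal `T`-inconsistent subsets of `A`. -/
def Conf (Inc : Set α → Prop) (A : Set α) : Set (Set α) :=
  {C | C ⊆ A ∧ Inc C ∧ ∀ C' : Set α, C' ⊂ C → ¬ Inc C'}

/-- `H` is conflict-confining for `⟨T, A⟩`. -/
def ConflictConfining (Inc : Set α → Prop) (A H : Set α) : Prop :=
  Conf Inc (A ∪ H) = Conf Inc A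

/-- AR entailment: every repair entails `a`. -/
def EntAR (Inc : Set α → Prop) (Ent : Set α → α → Prop) (A : Set α) (a : α) : Prop :=
  ∀ R : Set α, IsRepair Inc A R → Ent R a

/-- Brave entailment: some repair entails `a`. -/
def EntBrave (Inc : Set α → Prop) (Ent : Set α → α → Prop) (A : Set α) (a : α) : Prop :=
  ∃ R : Set α, IsRepair Inc A R ∧ Ent R a

/-- Atoms over the single individual `a`. -/
inductive Atom3 where
  | B1 | B2 | B3 | C1 | C2 | A
deriving DecidableEq

/-- T-inconsistency: `{B₁,B₂}` and `{C₁,C₂}` are the disjoint pairs. -/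
def Inc3 (S : Set Atom3) : Prop :=
  ({Atom3.B1, Atom3.B2} : Set Atom3) ⊆ S ∨ ({Atom3.C1, Atom3.C2} : Set Atom3) ⊆ S

/-- `⟨T, S⟩` entails the observation `A(a)`. -/
def EntailsA3 (S : Set Atom3) : Prop :=
  Atom3.B1 ∈ S ∨ Atom3.B3 ∈ S ∨ Atom3.A ∈ S

lemma inc3_iff (S : Set Atom3) :
    Inc3 S ↔ (Atom3.B1 ∈ S ∧ Atom3.B2 ∈ S) ∨ (Atom3.C1 ∈ S ∧ Atom3.C2 ∈ S) := by
  simp [Inc3, Set.insert_subset_iff]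

lemma mem_of_repair {Inc : Set α → Prop} {A R : Set α} (h : IsRepair Inc A R)
    {x : α} (hx : x ∈ A) (hc : ¬ Inc (insert x R)) : x ∈ R := by
  have := h.2.2 (insert x R) (Set.insert_subset hx h.1) hc (Set.subset_insert x R)
  rw [← this]; exact Set.mem_insert x R

/-- Non-convexity of the set of AR-hypotheses. -/
theorem stmt3 :
    ∃ (B₁ B₂ B₃ : Set Atom3),
      B₁ = {Atom3.B1} ∧ B₂ = {Atom3.B1, Atom3.B2} ∧
      B₃ = {Atom3.B1, Atom3.B2, Atom3.B3} ∧
      B₁ ⊂ B₂ ∧ B₂ ⊂ B₃ ∧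
      (∀ R : Set Atom3,
        IsRepair Inc3 (({Atom3.C1, Atom3.C2} : Set Atom3) ∪ B₁) R → EntailsA3 R) ∧
      ¬ (∀ R : Set Atom3,
        IsRepair Inc3 (({Atom3.C1, Atom3.C2} : Set Atom3) ∪ B₂) R → EntailsA3 R) ∧
      (∀ R : Set Atom3,
        IsRepair Inc3 (({Atom3.C1, Atom3.C2} : Set Atom3) ∪ B₃) R → EntailsA3 R) := by
  refine ⟨{Atom3.B1}, {Atom3.B1, Atom3.B2}, {Atom3.B1, Atom3.B2, Atom3.B3},
    rfl, rfl, rfl, ?_, ?_, ?_, ?_, ?_⟩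
  · constructor
    · intro x hx; simp_all
    · intro h; have := h (Set.mem_insert_iff.mpr (Or.inr rfl)); simp_all
  · constructor
    · intro x hx; simp_all; tauto
    · intro h
      have := h (show Atom3.B3 ∈ ({Atom3.B1, Atom3.B2, Atom3.B3} : Set Atom3) by simp)
      simp_all
  · -- B₁ case: every repair contains B1
    intro R hR
    left
    apply mem_of_repair hR (by simp)
    rw [inc3_iff]
    rintro (⟨-, h2⟩ | ⟨h1, h2⟩)
    · rcases (Set.mem_insert_iff.mp h2) with h | h
      · exact absurd h (by simp)
      · have := hR.1 h; simp_all
    · apply hR.2.1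
      rw [inc3_iff]
      right
      constructor
      · rcases (Set.mem_insert_iff.mp h1) with h | h
        · exact absurd h (by simp)
        · exact h
      · rcases (Set.mem_insert_iff.mp h2) with h | h
        · exact absurd h (by simp)
        · exact h
  · -- B₂ case: counterexample repair {C1, B2}
    intro h
    have hrep : IsRepair Inc3 (({Atom3.C1, Atom3.C2} : Set Atom3) ∪ {Atom3.B1, Atom3.B2})
        ({Atom3.C1, Atom3.B2} : Set Atom3) := by
      refine ⟨?_, ?_, ?_⟩
      · intro x hx; simp_all; tauto
      · rw [inc3_iff]; simp
      · intro R' hsub hcons hsup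
        ext x
        constructor
        · intro hx
          have hx' := hsub hx
          simp only [Set.mem_union, Set.mem_insert_iff, Set.mem_singleton_iff] at hx' ⊢
          rcases hx' with (h | h) | (h | h)
          · exact Or.inl h
          · exfalso; apply hcons; rw [inc3_iff]; right
            exact ⟨hsup (by simp), h ▸ hx⟩
          · exfalso; apply hcons; rw [inc3_iff]; left
            exact ⟨h ▸ hx, hsup (by simp)⟩
          · exact Or.inr h
        · intro hx; exact hsup hx
    have := h _ hrep
    rw [EntailsA3] at this
    simp_all
  · -- B₃ case: every repair contains B3
    intro R hR
    right; left
    apply mem_of_repair hR (by simp)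
    rw [inc3_iff]
    have mem : ∀ x : Atom3, x ≠ Atom3.B3 → x ∈ insert Atom3.B3 R → x ∈ R := by
      intro x hx h
      rcases Set.mem_insert_iff.mp h with h | h
      · exact absurd h hx
      · exact h
    rintro (⟨h1, h2⟩ | ⟨h1, h2⟩)
    · exact hR.2.1 ((inc3_iff R).mpr (Or.inl ⟨mem _ (by simp) h1, mem _ (by simp) h2⟩))
    · exact hR.2.1 ((inc3_iff R).mpr (Or.inr ⟨mem _ (by simp) h1, mem _ (by simp) h2⟩))
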